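/- Let E be a real inner product space, X ⊆ E, f₀ : E → ℝ, and f₁, f₂ : E → ℝ convex with f₂ differentiable on E. Let (x_m)_{m ≥ 0} be a sequence in X such that f₁(x₀) − f₂(x₀) ≤ 0 and, for every m ≥ 1, x_m minimizes f₀ over {x ∈ X : f₁(x) ≤ f₂(x_{m−1}) + ⟨∇f₂(x_{m−1}), x − x_{m−1}⟩}. Then for every m ≥ 1, f₁(x_m) − f₂(x_m) ≤ 0 and f₀(x_m) ≤ f₀(x_{m−1}); in particular the sequence (f₀(x_m)) is non-increasing, and if f₀ is bounded below on X then (f₀(x_m)) converges. -/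

import Mathlib

open Set

section FirstOrderCondition

variable {E : Type*} [NormedAddCommGroup E] [NormedSpace ℝ E] {s : Set E} {f : E → ℝ}
  {f' : E →L[ℝ] ℝ} {a b : E}

/-- Restricting `f` to the segment `t ↦ a + t • (b - a)` reduces this to the one-variable
fact that the derivative at `0` is at most the slope between `0` and `1`. -/
theorem ConvexOn.add_apply_sub_le_of_hasFDerivAt (hf : ConvexOn ℝ s f) (ha : a ∈ s)
    (hb : b ∈ s) (hf' : HasFDerivAt f f' a) : f a + f' (b - a) ≤ f b := by
  let ℓ : ℝ →ᵃ[ℝ] E := AffineMap.lineMap a b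
  have hderiv : HasDerivAt (f ∘ ℓ) (f' (b - a)) 0 := by
    have hf'' : HasFDerivAt f f' (ℓ 0) := by simpa [ℓ] using hf'
    exact hf''.comp_hasDerivAt 0 AffineMap.hasDerivAt_lineMap
  have hslope := (hf.comp_affineMap ℓ).le_slope_of_hasDerivAt (x := 0) (y := 1)
    (by simpa [ℓ] using ha) (by simpa [ℓ] using hb) one_pos hderiv
  simp only [slope_def_field, Function.comp_apply, sub_zero, div_one, ℓ,
    AffineMap.lineMap_apply_zero, AffineMap.lineMap_apply_one] at hslope
  linarith

end FirstOrderCondition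

theorem ConvexOn.add_inner_gradient_le {E : Type*} [NormedAddCommGroup E]
    [InnerProductSpace ℝ E] [CompleteSpace E] {s : Set E} {f : E → ℝ} {a b : E}
    (hf : ConvexOn ℝ s f) (ha : a ∈ s) (hb : b ∈ s) (hd : DifferentiableAt ℝ f a) :
    f a + inner ℝ (gradient f a) (b - a) ≤ f b := by
  simpa using hf.add_apply_sub_le_of_hasFDerivAt ha hb
    (hasGradientAt_iff_hasFDerivAt.mp hd.hasGradientAt)

theorem ccp_iterates_general
    {E : Type*} [NormedAddCommGroup E] [InnerProductSpace ℝ E] [CompleteSpace E]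
    (X : Set E) (f₀ f₁ f₂ : E → ℝ)
    (h₂ : ConvexOn ℝ Set.univ f₂)
    (hd : Differentiable ℝ f₂)
    (x : ℕ → E) (hxX : ∀ m, x m ∈ X)
    (h0 : f₁ (x 0) - f₂ (x 0) ≤ 0)
    (hmem : ∀ m : ℕ,
      f₁ (x (m + 1)) ≤ f₂ (x m) + (inner ℝ (gradient f₂ (x m)) (x (m + 1) - x m) : ℝ))
    (hmin : ∀ m : ℕ, ∀ y ∈ X,
      f₁ y ≤ f₂ (x m) + (inner ℝ (gradient f₂ (x m)) (y - x m) : ℝ) →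
      f₀ (x (m + 1)) ≤ f₀ y) :
    (∀ m : ℕ, f₁ (x (m + 1)) - f₂ (x (m + 1)) ≤ 0 ∧ f₀ (x (m + 1)) ≤ f₀ (x m)) ∧
    Antitone (fun m : ℕ => f₀ (x m)) ∧
    (BddBelow (f₀ '' X) →
      ∃ c : ℝ, Filter.Tendsto (fun m : ℕ => f₀ (x m)) Filter.atTop (nhds c)) := by
  -- The linearization of the convex `f₂` lies below `f₂`, so the convexified constraint is
  -- stricter than the DC one.
  have hfeas : ∀ m, f₁ (x m) - f₂ (x m) ≤ 0 := by
    rintro (_ | m)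
    · exact h0
    · have := h₂.add_inner_gradient_le (mem_univ (x m)) (mem_univ (x (m + 1))) (hd (x m))
      linarith [hmem m]
  -- A feasible `x m` satisfies the constraint linearized at itself, so it competes with `x (m + 1)`.
  have hdesc : ∀ m, f₀ (x (m + 1)) ≤ f₀ (x m) := fun m =>
    hmin m (x m) (hxX m) (by simpa using sub_nonpos.mp (hfeas m))
  have hanti : Antitone fun m => f₀ (x m) := antitone_nat_of_succ_le hdesc
  refine ⟨fun m => ⟨hfeas (m + 1), hdesc m⟩, hanti, fun hbdd => ⟨_, tendsto_atTop_ciInf hanti ?_⟩⟩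
  exact hbdd.mono (range_subset_iff.mpr fun m => mem_image_of_mem f₀ (hxX m))

/-- The iterated convex–concave procedure (Algorithm 1 of the paper): starting from
a feasible point of the DC-constrained problem, each iterate minimizes `f₀` over the
feasible set obtained by linearizing `f₂` at the previous iterate. Then every iterate
is feasible for the DC constraint, the objective values are non-increasing, and they
converge whenever `f₀` is bounded below on `X`. -/
theorem ccp_iterates
    {E : Type*} [NormedAddCommGroup E] [InnerProductSpace ℝ E] [CompleteSpace E]
    (X : Set E) (f₀ f₁ f₂ : E → ℝ)
    (h₁ : ConvexOn ℝ Set.univ f₁) (h₂ : ConvexOn ℝ Set.univ f₂)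
    (hd : Differentiable ℝ f₂)
    (x : ℕ → E) (hxX : ∀ m, x m ∈ X)
    (h0 : f₁ (x 0) - f₂ (x 0) ≤ 0)
    (hmem : ∀ m : ℕ,
      f₁ (x (m + 1)) ≤ f₂ (x m) + (inner ℝ (gradient f₂ (x m)) (x (m + 1) - x m) : ℝ))
    (hmin : ∀ m : ℕ, ∀ y ∈ X,
      f₁ y ≤ f₂ (x m) + (inner ℝ (gradient f₂ (x m)) (y - x m) : ℝ) →
      f₀ (x (m + 1)) ≤ f₀ y) :
    (∀ m : ℕ, f₁ (x (m + 1)) - f₂ (x (m + 1)) ≤ 0 ∧ f₀ (x (m + 1)) ≤ f₀ (x m)) ∧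
    Antitone (fun m : ℕ => f₀ (x m)) ∧
    (BddBelow (f₀ '' X) →
      ∃ c : ℝ, Filter.Tendsto (fun m : ℕ => f₀ (x m)) Filter.atTop (nhds c)) :=
  ccp_iterates_general X f₀ f₁ f₂ h₂ hd x hxX h0 hmem hmin
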